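/- arXiv:2509.07474 — 2 statements merged into one kernel-verified Lean document; each statement's English description precedes it below -/
import Mathlib

section
/- Let P₀ be an n_x×n_x real matrix such that S₀ := H·P₀·Hᵀ + R is invertible, and set K₀ := P₀·Hᵀ·S₀⁻¹. Then the Kalman-gain map P ↦ K(P) = P·Hᵀ·(S(P))⁻¹ is Fréchet differentiable at P₀, and its derivative is the linear map Δ ↦ (I − K₀·H) · Δ · Hᵀ · S₀⁻¹; equivalently, the derivative applied to Δ equals Δ·Hᵀ·S₀⁻¹ − P₀·Hᵀ·S₀⁻¹·H·Δ·Hᵀ·S₀⁻¹. -/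
/-!
The Kalman gain `K(P) = (P Hᵀ) · S(P)⁻¹` is the product of a linear map of `P` and the inverse of
an affine map of `P`, so the product rule and the chain rule, with `d(S⁻¹) = -S⁻¹ dS S⁻¹`, give
`dK = Δ Hᵀ S₀⁻¹ - P₀ Hᵀ S₀⁻¹ H Δ Hᵀ S₀⁻¹ = (I - K₀ H) Δ Hᵀ S₀⁻¹`.
The entrywise sup norm on matrices is not submultiplicative, so the derivative of inversion is
computed in the Banach algebra of operators on Euclidean space and transported back along the
linear homeomorphism `Matrix.toEuclideanCLM`.
-/

open Matrix

attribute [local instance] Matrix.normedAddCommGroup Matrix.normedSpace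

theorem MulEquiv.map_ringInverse {M N : Type*} [MonoidWithZero M] [MonoidWithZero N] (e : M ≃* N)
    (a : M) : e (Ring.inverse a) = Ring.inverse (e a) := by
  by_cases ha : IsUnit a
  · obtain ⟨u, rfl⟩ := ha
    rw [Ring.inverse_unit]
    exact (Ring.inverse_unit (Units.map e.toMonoidHom u)).symm
  · rw [Ring.inverse_non_unit _ ha, Ring.inverse_non_unit _ (by rwa [isUnit_map_iff]), map_zero]

namespace Matrix

section Product

variable {𝕜 : Type*} [NontriviallyNormedField 𝕜] [CompleteSpace 𝕜] {l m n : Type*}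

noncomputable def mulLeftCLM [Fintype m] [Fintype n] (A : Matrix l m 𝕜) :
    Matrix m n 𝕜 →L[𝕜] Matrix l n 𝕜 :=
  (mulLeftLinearMap n 𝕜 A).toContinuousLinearMap

noncomputable def mulRightCLM [Fintype l] [Fintype m] (B : Matrix m n 𝕜) :
    Matrix l m 𝕜 →L[𝕜] Matrix l n 𝕜 :=
  (mulRightLinearMap l 𝕜 B).toContinuousLinearMap

theorem _root_.HasFDerivAt.matrix_mul [Fintype l] [Fintype m] [Fintype n]
    {E : Type*} [NormedAddCommGroup E] [NormedSpace 𝕜 E]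
    {f : E → Matrix l m 𝕜} {g : E → Matrix m n 𝕜} {f' : E →L[𝕜] Matrix l m 𝕜}
    {g' : E →L[𝕜] Matrix m n 𝕜} {x : E} (hf : HasFDerivAt f f' x) (hg : HasFDerivAt g g' x) :
    HasFDerivAt (fun y => f y * g y)
      ((mulLeftCLM (f x)).comp g' + (mulRightCLM (g x)).comp f') x := by
  let B : Matrix l m 𝕜 →L[𝕜] Matrix m n 𝕜 →L[𝕜] Matrix l n 𝕜 :=
    LinearMap.toContinuousLinearMap
      ((LinearMap.toContinuousLinearMap : _ ≃ₗ[𝕜] _).toLinearMap ∘ₗ mulLinearMap 𝕜)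
  exact (B.hasFDerivAt_of_bilinear hf hg).congr_fderiv (by ext1 Δ; rfl)

end Product

section Inverse

variable {𝕜 : Type*} [RCLike 𝕜] {n : Type*} [Fintype n] [DecidableEq n]

theorem toEuclideanCLM_nonsing_inv (A : Matrix n n 𝕜) :
    toEuclideanCLM (n := n) (𝕜 := 𝕜) A⁻¹ = Ring.inverse (toEuclideanCLM (n := n) (𝕜 := 𝕜) A) := by
  rw [nonsing_inv_eq_ringInverse]
  exact (toEuclideanCLM (n := n) (𝕜 := 𝕜)).toRingEquiv.toMulEquiv.map_ringInverse A

theorem hasFDerivAt_inv {A : Matrix n n 𝕜} (hA : IsUnit A) :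
    HasFDerivAt (fun X : Matrix n n 𝕜 => X⁻¹) (-(mulRightCLM A⁻¹).comp (mulLeftCLM A⁻¹)) A := by
  let e : Matrix n n 𝕜 ≃L[𝕜] (EuclideanSpace 𝕜 n →L[𝕜] EuclideanSpace 𝕜 n) :=
    (toEuclideanCLM (n := n) (𝕜 := 𝕜)).toAlgEquiv.toLinearEquiv.toContinuousLinearEquiv
  have he : ∀ X, e X = toEuclideanCLM (n := n) (𝕜 := 𝕜) X := fun _ => rfl
  have hinv : (fun X : Matrix n n 𝕜 => X⁻¹) = e.symm ∘ Ring.inverse ∘ e := by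
    funext X
    rw [Function.comp_apply, Function.comp_apply, he, ← toEuclideanCLM_nonsing_inv, ← he,
      e.symm_apply_apply]
  obtain ⟨u, hu⟩ := hA.map (toEuclideanCLM (n := n) (𝕜 := 𝕜))
  have hu_inv : (↑u⁻¹ : EuclideanSpace 𝕜 n →L[𝕜] EuclideanSpace 𝕜 n) = e A⁻¹ := by
    rw [← Ring.inverse_unit, hu, he, toEuclideanCLM_nonsing_inv]
  have h := hasFDerivAt_ringInverse (𝕜 := 𝕜) u
  rw [hu, ← he, hu_inv] at h
  rw [hinv]
  refine (e.symm.hasFDerivAt.comp A (h.comp A e.hasFDerivAt)).congr_fderiv ?_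
  ext1 Δ
  change e.symm (-(e A⁻¹ * e Δ * e A⁻¹)) = -(A⁻¹ * Δ * A⁻¹)
  rw [he, he, ← map_mul, ← map_mul, ← map_neg, ← he, e.symm_apply_apply]

end Inverse

end Matrix

theorem stmt_1_general (n_x n_z : ℕ)
    (H : Matrix (Fin n_z) (Fin n_x) ℝ) (R : Matrix (Fin n_z) (Fin n_z) ℝ)
    (P₀ : Matrix (Fin n_x) (Fin n_x) ℝ)
    (S₀ : Matrix (Fin n_z) (Fin n_z) ℝ) (hS₀ : S₀ = H * P₀ * Hᵀ + R)
    (hS : IsUnit S₀)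
    (K₀ : Matrix (Fin n_x) (Fin n_z) ℝ) (hK₀ : K₀ = P₀ * Hᵀ * S₀⁻¹) :
    ∃ L : Matrix (Fin n_x) (Fin n_x) ℝ →L[ℝ] Matrix (Fin n_x) (Fin n_z) ℝ,
      HasFDerivAt
        (fun P : Matrix (Fin n_x) (Fin n_x) ℝ => P * Hᵀ * (H * P * Hᵀ + R)⁻¹) L P₀ ∧
      (∀ Δ : Matrix (Fin n_x) (Fin n_x) ℝ,
        L Δ = (1 - K₀ * H) * Δ * Hᵀ * S₀⁻¹) ∧
      (∀ Δ : Matrix (Fin n_x) (Fin n_x) ℝ,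
        L Δ = Δ * Hᵀ * S₀⁻¹ - P₀ * Hᵀ * S₀⁻¹ * H * Δ * Hᵀ * S₀⁻¹) := by
  have hPHt : HasFDerivAt (fun P : Matrix (Fin n_x) (Fin n_x) ℝ => P * Hᵀ) (mulRightCLM Hᵀ) P₀ :=
    (mulRightCLM Hᵀ).hasFDerivAt
  have hS' : HasFDerivAt (fun P : Matrix (Fin n_x) (Fin n_x) ℝ => H * P * Hᵀ + R)
      ((mulRightCLM Hᵀ).comp (mulLeftCLM H)) P₀ :=
    ((mulRightCLM Hᵀ).comp (mulLeftCLM H)).hasFDerivAt.add_const R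
  have hinv : HasFDerivAt (fun S : Matrix (Fin n_z) (Fin n_z) ℝ => S⁻¹)
      (-(mulRightCLM S₀⁻¹).comp (mulLeftCLM S₀⁻¹)) (H * P₀ * Hᵀ + R) :=
    hS₀ ▸ hasFDerivAt_inv hS
  have hK := hPHt.matrix_mul (hinv.comp P₀ hS')
  simp only [Function.comp_apply, ← hS₀] at hK
  have hL : ∀ Δ : Matrix (Fin n_x) (Fin n_x) ℝ,
      P₀ * Hᵀ * -(S₀⁻¹ * (H * Δ * Hᵀ) * S₀⁻¹) + Δ * Hᵀ * S₀⁻¹ =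
        Δ * Hᵀ * S₀⁻¹ - P₀ * Hᵀ * S₀⁻¹ * H * Δ * Hᵀ * S₀⁻¹ := by
    intro Δ
    simp only [Matrix.mul_neg, Matrix.mul_assoc]
    abel
  refine ⟨_, hK, fun Δ => (hL Δ).trans ?_, hL⟩
  simp only [hK₀, Matrix.sub_mul, Matrix.one_mul, Matrix.mul_assoc]

/-- If `S₀ = H·P₀·Hᵀ + R` is invertible and `K₀ = P₀·Hᵀ·S₀⁻¹`, then
`P ↦ K(P) = P·Hᵀ·(S(P))⁻¹` is Fréchet differentiable at `P₀` with derivative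
`Δ ↦ (I − K₀·H)·Δ·Hᵀ·S₀⁻¹`, equivalently `Δ ↦ Δ·Hᵀ·S₀⁻¹ − P₀·Hᵀ·S₀⁻¹·H·Δ·Hᵀ·S₀⁻¹`. -/
theorem stmt_1 (n_x n_z : ℕ) (hnx : 0 < n_x) (hnz : 0 < n_z)
    (H : Matrix (Fin n_z) (Fin n_x) ℝ) (R : Matrix (Fin n_z) (Fin n_z) ℝ)
    (P₀ : Matrix (Fin n_x) (Fin n_x) ℝ)
    (S₀ : Matrix (Fin n_z) (Fin n_z) ℝ) (hS₀ : S₀ = H * P₀ * Hᵀ + R)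
    (hS : IsUnit S₀)
    (K₀ : Matrix (Fin n_x) (Fin n_z) ℝ) (hK₀ : K₀ = P₀ * Hᵀ * S₀⁻¹) :
    ∃ L : Matrix (Fin n_x) (Fin n_x) ℝ →L[ℝ] Matrix (Fin n_x) (Fin n_z) ℝ,
      HasFDerivAt
        (fun P : Matrix (Fin n_x) (Fin n_x) ℝ => P * Hᵀ * (H * P * Hᵀ + R)⁻¹) L P₀ ∧
      (∀ Δ : Matrix (Fin n_x) (Fin n_x) ℝ,
        L Δ = (1 - K₀ * H) * Δ * Hᵀ * S₀⁻¹) ∧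
      (∀ Δ : Matrix (Fin n_x) (Fin n_x) ℝ,
        L Δ = Δ * Hᵀ * S₀⁻¹ - P₀ * Hᵀ * S₀⁻¹ * H * Δ * Hᵀ * S₀⁻¹) :=
  stmt_1_general n_x n_z H R P₀ S₀ hS₀ hS K₀ hK₀
end

section
/- Let P₀ be an n_x×n_x real matrix such that S₀ := H·P₀·Hᵀ + R is invertible, and set K₀ := P₀·Hᵀ·S₀⁻¹. Then the covariance-update map U(P) := (I − K(P)·H)·P is Fréchet differentiable at P₀, and its derivative is the linear map Δ ↦ (I − K₀·H) · Δ · (I − Hᵀ·S₀⁻¹·H·P₀). -/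
open Matrix

attribute [local instance] Matrix.normedAddCommGroup Matrix.normedSpace

/-!
`U(P) = (I - K(P) H) P` is built from matrix products and `P ↦ S(P)⁻¹`, so the product rule and
the derivative `Δ ↦ -S⁻¹ Δ S⁻¹` of inversion at an invertible `S` give its derivative. The latter
is the derivative of `Ring.inverse` in a complete normed algebra, transported to matrices along the
algebra isomorphism with operators on `EuclideanSpace ℝ n` (in finite dimension the choice of norm
does not matter). Collecting terms, `K'(P₀) Δ = (I - K₀H) Δ Hᵀ S₀⁻¹` and
`U'(P₀) Δ = (I - K₀H) Δ - K'(P₀)(Δ) H P₀ = (I - K₀H) Δ (I - Hᵀ S₀⁻¹ H P₀)`.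
-/

theorem map_ringInverse {R S F : Type*} [MonoidWithZero R] [MonoidWithZero S] [EquivLike F R S]
    [MulEquivClass F R S] (e : F) (x : R) : e (Ring.inverse x) = Ring.inverse (e x) := by
  by_cases hx : IsUnit x
  · obtain ⟨u, rfl⟩ := hx
    have hu : e u = Units.map (e : R →* S) u := rfl
    rw [Ring.inverse_unit, hu, Ring.inverse_unit, Units.coe_map_inv]
    rfl
  · rw [Ring.inverse_non_unit x hx, Ring.inverse_non_unit _ (by simpa using hx), map_zero]

namespace Matrix

variable {l m n : Type*} [Fintype l] [Fintype m] [Fintype n]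

noncomputable def mulCLM : Matrix l m ℝ →L[ℝ] Matrix m n ℝ →L[ℝ] Matrix l n ℝ :=
  LinearMap.toContinuousLinearMap
    (LinearMap.toContinuousLinearMap.toLinearMap ∘ₗ mulLinearMap ℝ)

theorem hasFDerivAt_inv_s2 [DecidableEq n] {S : Matrix n n ℝ} (hS : IsUnit S) :
    ∃ L : Matrix n n ℝ →L[ℝ] Matrix n n ℝ,
      HasFDerivAt (fun A : Matrix n n ℝ => A⁻¹) L S ∧ ∀ Δ, L Δ = -(S⁻¹ * Δ * S⁻¹) := by
  let e : Matrix n n ℝ ≃ₐ[ℝ] (EuclideanSpace ℝ n →L[ℝ] EuclideanSpace ℝ n) :=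
    toEuclideanCLM.toAlgEquiv
  let eL : Matrix n n ℝ ≃L[ℝ] (EuclideanSpace ℝ n →L[ℝ] EuclideanSpace ℝ n) :=
    e.toLinearEquiv.toContinuousLinearEquiv
  have inv_eq : (fun A : Matrix n n ℝ => A⁻¹) = eL.symm ∘ Ring.inverse ∘ eL := by
    funext A
    simp only [Function.comp_apply, nonsing_inv_eq_ringInverse]
    exact (e.symm_apply_apply _).symm.trans (congrArg e.symm (map_ringInverse e A))
  have h := hasFDerivAt_ringInverse (𝕜 := ℝ) (hS.map e).unit
  refine ⟨_, inv_eq ▸ eL.symm.hasFDerivAt.comp S (h.comp S eL.hasFDerivAt), fun Δ => ?_⟩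
  have unit_inv : (((hS.map e).unit⁻¹ : (EuclideanSpace ℝ n →L[ℝ] EuclideanSpace ℝ n)ˣ) :
      EuclideanSpace ℝ n →L[ℝ] EuclideanSpace ℝ n) = e S⁻¹ := by
    rw [← Ring.inverse_unit, IsUnit.unit_spec, nonsing_inv_eq_ringInverse, map_ringInverse]
  change e.symm (-(_ * e Δ * _)) = _
  rw [unit_inv, ← map_mul, ← map_mul, ← map_neg, e.symm_apply_apply]

end Matrix

/- The domain is a matrix space rather than a general normed space so that the derivatives get
the same `→L` type, built on `Matrix`'s own topology instance, as in the statements below. -/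
section MatrixCalculus

variable {p q l m n : Type*} [Fintype p] [Fintype q] [Fintype l] [Fintype m] [Fintype n]
  {x : Matrix p q ℝ}

theorem HasFDerivAt.matrix_mul_s2 {f : Matrix p q ℝ → Matrix l m ℝ}
    {g : Matrix p q ℝ → Matrix m n ℝ} {f' : Matrix p q ℝ →L[ℝ] Matrix l m ℝ}
    {g' : Matrix p q ℝ →L[ℝ] Matrix m n ℝ} (hf : HasFDerivAt f f' x) (hg : HasFDerivAt g g' x) :
    ∃ L : Matrix p q ℝ →L[ℝ] Matrix l n ℝ, HasFDerivAt (fun y => f y * g y) L x ∧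
      ∀ v, L v = f x * g' v + f' v * g x :=
  ⟨_, Matrix.mulCLM.hasFDerivAt_of_bilinear hf hg, fun _ => rfl⟩

theorem HasFDerivAt.matrix_mul_const {f : Matrix p q ℝ → Matrix l m ℝ}
    {f' : Matrix p q ℝ →L[ℝ] Matrix l m ℝ} (hf : HasFDerivAt f f' x) (B : Matrix m n ℝ) :
    ∃ L : Matrix p q ℝ →L[ℝ] Matrix l n ℝ, HasFDerivAt (fun y => f y * B) L x ∧
      ∀ v, L v = f' v * B := by
  let mulRight : Matrix l m ℝ →L[ℝ] Matrix l n ℝ := Matrix.mulCLM.flip B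
  have h : HasFDerivAt (fun y => mulRight (f y)) (mulRight.comp f') x :=
    mulRight.hasFDerivAt.comp x hf
  exact ⟨_, h, fun _ => rfl⟩

theorem HasFDerivAt.matrix_inv [DecidableEq n] {f : Matrix p q ℝ → Matrix n n ℝ}
    {f' : Matrix p q ℝ →L[ℝ] Matrix n n ℝ} (hf : HasFDerivAt f f' x) (hx : IsUnit (f x)) :
    ∃ L : Matrix p q ℝ →L[ℝ] Matrix n n ℝ, HasFDerivAt (fun y => (f y)⁻¹) L x ∧
      ∀ v, L v = -((f x)⁻¹ * f' v * (f x)⁻¹) :=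
  have ⟨_, hL, hL_apply⟩ := Matrix.hasFDerivAt_inv_s2 hx
  ⟨_, hL.comp x hf, fun v => hL_apply (f' v)⟩

end MatrixCalculus

section Kalman

variable {m n : Type*} [Fintype m] [Fintype n] (H : Matrix m n ℝ) (R : Matrix m m ℝ)

def innovationCov (P : Matrix n n ℝ) : Matrix m m ℝ := H * P * Hᵀ + R

theorem hasFDerivAt_innovationCov (P₀ : Matrix n n ℝ) :
    ∃ L : Matrix n n ℝ →L[ℝ] Matrix m m ℝ,
      HasFDerivAt (innovationCov H R) L P₀ ∧ ∀ Δ, L Δ = H * Δ * Hᵀ :=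
  let L : Matrix n n ℝ →L[ℝ] Matrix m m ℝ := (Matrix.mulCLM.flip Hᵀ).comp (Matrix.mulCLM H)
  ⟨L, L.hasFDerivAt.add_const R, fun _ => rfl⟩

variable [DecidableEq m] [DecidableEq n] {P₀ : Matrix n n ℝ}

noncomputable def kalmanGain (P : Matrix n n ℝ) : Matrix n m ℝ :=
  P * Hᵀ * (innovationCov H R P)⁻¹

noncomputable def covUpdate (P : Matrix n n ℝ) : Matrix n n ℝ := (1 - kalmanGain H R P * H) * P

theorem hasFDerivAt_kalmanGain (hS : IsUnit (innovationCov H R P₀)) :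
    ∃ L : Matrix n n ℝ →L[ℝ] Matrix n m ℝ, HasFDerivAt (kalmanGain H R) L P₀ ∧
      ∀ Δ, L Δ = (1 - kalmanGain H R P₀ * H) * Δ * Hᵀ * (innovationCov H R P₀)⁻¹ := by
  obtain ⟨S', hS', hS'_apply⟩ := hasFDerivAt_innovationCov H R P₀
  obtain ⟨I', hI', hI'_apply⟩ := hS'.matrix_inv hS
  obtain ⟨L₁, h₁, hL₁_apply⟩ := (hasFDerivAt_id P₀).matrix_mul_const Hᵀ
  obtain ⟨L, hL, hL_apply⟩ := h₁.matrix_mul_s2 hI'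
  refine ⟨L, hL, fun Δ => (hL_apply Δ).trans ?_⟩
  rw [hI'_apply, hS'_apply, hL₁_apply]
  -- `ContinuousLinearMap.id_apply` does not match through the sup-norm instances; unfold by `change`.
  change P₀ * Hᵀ * _ + Δ * Hᵀ * _ = _
  simp only [kalmanGain, Matrix.sub_mul, Matrix.mul_neg, Matrix.one_mul, Matrix.mul_assoc]
  abel

theorem hasFDerivAt_covUpdate (hS : IsUnit (innovationCov H R P₀)) :
    ∃ L : Matrix n n ℝ →L[ℝ] Matrix n n ℝ, HasFDerivAt (covUpdate H R) L P₀ ∧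
      ∀ Δ, L Δ = (1 - kalmanGain H R P₀ * H) * Δ *
        (1 - Hᵀ * (innovationCov H R P₀)⁻¹ * H * P₀) := by
  obtain ⟨K', hK', hK'_apply⟩ := hasFDerivAt_kalmanGain H R hS
  obtain ⟨L₁, h₁, hL₁_apply⟩ := hK'.matrix_mul_const H
  obtain ⟨L, hL, hL_apply⟩ := (h₁.const_sub 1).matrix_mul_s2 (hasFDerivAt_id P₀)
  refine ⟨L, hL, fun Δ => (hL_apply Δ).trans ?_⟩
  change _ * Δ + -(L₁ Δ) * P₀ = _
  rw [hL₁_apply, hK'_apply]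
  simp only [Matrix.mul_sub, Matrix.neg_mul, Matrix.mul_one, Matrix.mul_assoc]
  abel

end Kalman

theorem stmt_2_general (n_x n_z : ℕ)
    (H : Matrix (Fin n_z) (Fin n_x) ℝ) (R : Matrix (Fin n_z) (Fin n_z) ℝ)
    (P₀ : Matrix (Fin n_x) (Fin n_x) ℝ)
    (S₀ : Matrix (Fin n_z) (Fin n_z) ℝ) (hS₀ : S₀ = H * P₀ * Hᵀ + R)
    (hS : IsUnit S₀)
    (K₀ : Matrix (Fin n_x) (Fin n_z) ℝ) (hK₀ : K₀ = P₀ * Hᵀ * S₀⁻¹) :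
    ∃ L : Matrix (Fin n_x) (Fin n_x) ℝ →L[ℝ] Matrix (Fin n_x) (Fin n_x) ℝ,
      HasFDerivAt
        (fun P : Matrix (Fin n_x) (Fin n_x) ℝ =>
          (1 - P * Hᵀ * (H * P * Hᵀ + R)⁻¹ * H) * P) L P₀ ∧
      ∀ Δ : Matrix (Fin n_x) (Fin n_x) ℝ,
        L Δ = (1 - K₀ * H) * Δ * (1 - Hᵀ * S₀⁻¹ * H * P₀) := by
  subst hS₀ hK₀
  exact hasFDerivAt_covUpdate H R hS

/-- If `S₀ = H·P₀·Hᵀ + R` is invertible and `K₀ = P₀·Hᵀ·S₀⁻¹`, then the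
covariance-update map `U(P) = (I − K(P)·H)·P` is Fréchet differentiable at `P₀` with
derivative `Δ ↦ (I − K₀·H)·Δ·(I − Hᵀ·S₀⁻¹·H·P₀)`. -/
theorem stmt_2 (n_x n_z : ℕ) (hnx : 0 < n_x) (hnz : 0 < n_z)
    (H : Matrix (Fin n_z) (Fin n_x) ℝ) (R : Matrix (Fin n_z) (Fin n_z) ℝ)
    (P₀ : Matrix (Fin n_x) (Fin n_x) ℝ)
    (S₀ : Matrix (Fin n_z) (Fin n_z) ℝ) (hS₀ : S₀ = H * P₀ * Hᵀ + R)
    (hS : IsUnit S₀)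
    (K₀ : Matrix (Fin n_x) (Fin n_z) ℝ) (hK₀ : K₀ = P₀ * Hᵀ * S₀⁻¹) :
    ∃ L : Matrix (Fin n_x) (Fin n_x) ℝ →L[ℝ] Matrix (Fin n_x) (Fin n_x) ℝ,
      HasFDerivAt
        (fun P : Matrix (Fin n_x) (Fin n_x) ℝ =>
          (1 - P * Hᵀ * (H * P * Hᵀ + R)⁻¹ * H) * P) L P₀ ∧
      ∀ Δ : Matrix (Fin n_x) (Fin n_x) ℝ,
        L Δ = (1 - K₀ * H) * Δ * (1 - Hᵀ * S₀⁻¹ * H * P₀) :=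
  stmt_2_general n_x n_z H R P₀ S₀ hS₀ hS K₀ hK₀
end
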